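/- (Comparison Principle 2, Proposition 3.) Fix n, a convention m̄, a strategy k ≠ m̄, integers η, ρ ≥ 1, a state x ∈ Δ^{(n)}, and a finite sequence σ of single-agent transitions. Define three paths, all assumed to lie in D^{(n)}(e_{m̄}): γ performs η consecutive m̄→k switches from x (reaching x^{m̄,k,η}), then applies the transition sequence σ (reaching a state z), then performs ρ consecutive m̄→k switches (reaching z^{m̄,k,ρ}); γ′ performs η and then immediately ρ consecutive m̄→k switches from x (reaching x^{m̄,k,η+ρ}), then applies σ (reaching z^{m̄,k,ρ}); γ″ applies σ from x (reaching z^{k,m̄,η}), then performs η and then ρ consecutive m̄→k switches (reaching z^{m̄,k,ρ}). Then η[I^{(n)}(γ′) − I^{(n)}(γ)] + ρ[I^{(n)}(γ″) − I^{(n)}(γ)] = 0. Consequently exactly one of the following holds: I^{(n)}(γ′) > I^{(n)}(γ) > I^{(n)}(γ″), or I^{(n)}(γ″) > I^{(n)}(γ) > I^{(n)}(γ′), or I^{(n)}(γ″) = I^{(n)}(γ) = I^{(n)}(γ′). -/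
import Mathlib


open Finset Filter

noncomputable section

/-- Expected payoff of strategy `i` at state `x`: `π(i,x) = ∑ j, A i j * x j`. -/
def pay {s : ℕ} (A : Fin s → Fin s → ℝ) (i : Fin s) (x : Fin s → ℝ) : ℝ :=
  ∑ j, A i j * x j

/-- The `i`-th standard basis vector `e_i` of `ℝ^s`. -/
def vertex {s : ℕ} (i : Fin s) : Fin s → ℝ := fun j => if j = i then 1 else 0

/-- The discrete simplex `Δ^{(n)}`. -/
def simplexD (s n : ℕ) : Set (Fin s → ℝ) :=
  {x | (∀ i, 0 ≤ x i) ∧ (∑ i, x i) = 1 ∧ ∀ i, ∃ k : ℤ, x i = (k : ℝ) / n}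

/-- The basin of attraction `D^{(n)}(e_m)` of the convention `m`. -/
def basin {s : ℕ} (A : Fin s → Fin s → ℝ) (n : ℕ) (m : Fin s) : Set (Fin s → ℝ) :=
  {x | x ∈ simplexD s n ∧ ∀ k, pay A m x ≥ pay A k x}

/-- The state `x^{i,j}` obtained from `x` when one agent switches from `i` to `j`. -/
def step {s : ℕ} (n : ℕ) (x : Fin s → ℝ) (i j : Fin s) : Fin s → ℝ :=
  fun h => x h + (1 / (n : ℝ)) * (vertex j h - vertex i h)

/-- Logit cost of a single transition whose target strategy is `j`:
`c^{(n)}(x, x^{i,j}) = max_l π(l,x) − π(j,x)`. -/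
def logitCost {s : ℕ} (A : Fin s → Fin s → ℝ) (x : Fin s → ℝ) (j : Fin s) : ℝ :=
  (⨆ l, pay A l x) - pay A j x


/-- Cost of the path obtained by applying the list of single-agent transitions `σ`
(each a pair `(i, j)` meaning one agent switches from `i` to `j`) starting at `x`. -/
def pathCostL {s : ℕ} (A : Fin s → Fin s → ℝ) (n : ℕ) :
    (Fin s → ℝ) → List (Fin s × Fin s) → ℝ
  | _, [] => 0
  | x, mv :: σ => logitCost A x mv.2 + pathCostL A n (step n x mv.1 mv.2) σ

/-- The list of states visited by the path starting at `x` with transitions `σ`. -/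
def pathStatesL {s : ℕ} (n : ℕ) :
    (Fin s → ℝ) → List (Fin s × Fin s) → List (Fin s → ℝ)
  | x, [] => [x]
  | x, mv :: σ => x :: pathStatesL n (step n x mv.1 mv.2) σ

def lPath {s : ℕ} (A : Fin s → Fin s → ℝ) (m : Fin s) (n : ℕ) :
    (Fin s → ℝ) → List (Fin s × Fin s) → ℝ
  | _, [] => 0
  | x, mv :: σ => (pay A m x - pay A mv.2 x) + lPath A m n (step n x mv.1 mv.2) σ

def applyM {s : ℕ} (n : ℕ) : (Fin s → ℝ) → List (Fin s × Fin s) → (Fin s → ℝ)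
  | x, [] => x
  | x, mv :: σ => applyM n (step n x mv.1 mv.2) σ

def dvec {s : ℕ} (n : ℕ) (m k : Fin s) : Fin s → ℝ :=
  fun h => (1 / (n : ℝ)) * (vertex k h - vertex m h)

lemma pay_add {s : ℕ} (A : Fin s → Fin s → ℝ) (i : Fin s) (x w : Fin s → ℝ) :
    pay A i (x + w) = pay A i x + pay A i w := by
  simp [pay, Pi.add_apply, mul_add, Finset.sum_add_distrib]

lemma pay_smul {s : ℕ} (A : Fin s → Fin s → ℝ) (i : Fin s) (t : ℝ) (w : Fin s → ℝ) :
    pay A i (t • w) = t * pay A i w := by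
  simp [pay, Pi.smul_apply, smul_eq_mul, Finset.mul_sum, mul_left_comm]

lemma step_add {s : ℕ} (n : ℕ) (x w : Fin s → ℝ) (i j : Fin s) :
    step n (x + w) i j = step n x i j + w := by
  funext h; simp [step, Pi.add_apply]; ring

lemma step_mk {s : ℕ} (n : ℕ) (x : Fin s → ℝ) (m k : Fin s) :
    step n x m k = x + dvec n m k := rfl

lemma logitCost_basin {s : ℕ} (A : Fin s → Fin s → ℝ) (n : ℕ) (m : Fin s)
    {y : Fin s → ℝ} (hy : y ∈ basin A n m) (j : Fin s) :
    logitCost A y j = pay A m y - pay A j y := by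
  unfold logitCost
  congr 1
  haveI : Nonempty (Fin s) := ⟨m⟩
  exact le_antisymm (ciSup_le fun l => hy.2 l) (le_ciSup (Set.finite_range fun l => pay A l y).bddAbove m)

lemma pathCost_eq_lPath {s : ℕ} (A : Fin s → Fin s → ℝ) (n : ℕ) (m : Fin s)
    (σ : List (Fin s × Fin s)) : ∀ x : Fin s → ℝ,
    (∀ y ∈ pathStatesL n x σ, y ∈ basin A n m) →
    pathCostL A n x σ = lPath A m n x σ := by
  induction σ with
  | nil => intro x _; rfl
  | cons mv σ ih =>
    intro x h
    have hx : x ∈ basin A n m := h x (by simp [pathStatesL])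
    have h' : ∀ y ∈ pathStatesL n (step n x mv.1 mv.2) σ, y ∈ basin A n m := by
      intro y hy; exact h y (by simp [pathStatesL, hy])
    simp [pathCostL, lPath, logitCost_basin A n m hx, ih _ h']

lemma lPath_append {s : ℕ} (A : Fin s → Fin s → ℝ) (m : Fin s) (n : ℕ)
    (σ₁ σ₂ : List (Fin s × Fin s)) : ∀ x : Fin s → ℝ,
    lPath A m n x (σ₁ ++ σ₂) = lPath A m n x σ₁ + lPath A m n (applyM n x σ₁) σ₂ := by
  induction σ₁ with
  | nil => intro x; simp [lPath, applyM]
  | cons mv σ₁ ih => intro x; simp [lPath, applyM, ih]; ring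

lemma applyM_add {s : ℕ} (n : ℕ) (σ : List (Fin s × Fin s)) :
    ∀ x w : Fin s → ℝ, applyM n (x + w) σ = applyM n x σ + w := by
  induction σ with
  | nil => intro x w; rfl
  | cons mv σ ih => intro x w; simp [applyM, step_add, ih]

lemma applyM_rep {s : ℕ} (n : ℕ) (m k : Fin s) (r : ℕ) :
    ∀ x : Fin s → ℝ, applyM n x (List.replicate r ((m, k) : Fin s × Fin s))
      = x + (r : ℝ) • dvec n m k := by
  induction r with
  | zero => intro x; simp [applyM]
  | succ r ih =>
    intro x
    rw [List.replicate_succ]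
    show applyM n (step n x m k) _ = _
    rw [step_mk, ih]
    funext h
    simp [Pi.add_apply, Pi.smul_apply, smul_eq_mul]
    ring

lemma lPath_translate {s : ℕ} (A : Fin s → Fin s → ℝ) (m : Fin s) (n : ℕ)
    (σ : List (Fin s × Fin s)) (w : Fin s → ℝ) : ∀ x : Fin s → ℝ,
    lPath A m n (x + w) σ = lPath A m n x σ
      + (σ.map (fun mv => pay A m w - pay A mv.2 w)).sum := by
  induction σ with
  | nil => intro x; simp [lPath]
  | cons mv σ ih =>
    intro x
    simp only [lPath, List.map_cons, List.sum_cons, step_add, ih, pay_add]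
    ring

lemma sum_map_const_mul {α : Type*} (t : ℝ) (g : α → ℝ) (l : List α) :
    (l.map (fun a => t * g a)).sum = t * (l.map g).sum := by
  induction l with
  | nil => simp
  | cons a l ih => simp [ih, mul_add]

lemma lPath_rep {s : ℕ} (A : Fin s → Fin s → ℝ) (m k : Fin s) (n : ℕ) (r : ℕ) :
    ∀ y : Fin s → ℝ, lPath A m n y (List.replicate r ((m, k) : Fin s × Fin s))
      = (r : ℝ) * (pay A m y - pay A k y)
        + ((r : ℝ) * ((r : ℝ) - 1) / 2) * (pay A m (dvec n m k) - pay A k (dvec n m k)) := by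
  induction r with
  | zero => intro y; simp [lPath]
  | succ r ih =>
    intro y
    rw [List.replicate_succ]
    show (pay A m y - pay A k y) + lPath A m n (step n y m k) _ = _
    rw [step_mk, ih, pay_add, pay_add]
    push_cast
    ring

lemma applyM_append {s : ℕ} (n : ℕ) (σ₁ σ₂ : List (Fin s × Fin s)) :
    ∀ x : Fin s → ℝ, applyM n x (σ₁ ++ σ₂) = applyM n (applyM n x σ₁) σ₂ := by
  induction σ₁ with
  | nil => intro x; rfl
  | cons mv σ₁ ih => intro x; simp [applyM, ih]

/-- **Comparison Principle 2 (Proposition 3).** -/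
theorem comparison_principle_two
    (s n : ℕ) (hs : 2 ≤ s) (hn : 0 < n)
    (A : Fin s → Fin s → ℝ)
    (m k : Fin s) (hkm : k ≠ m)
    (η ρ : ℕ) (hη : 1 ≤ η) (hρ : 1 ≤ ρ)
    (x : Fin s → ℝ) (hx : x ∈ simplexD s n)
    (σ : List (Fin s × Fin s)) (hσ : ∀ mv ∈ σ, mv.1 ≠ mv.2)
    -- the three paths
    (hγD : ∀ y ∈ pathStatesL n x
        (List.replicate η ((m, k) : Fin s × Fin s) ++ σ
          ++ List.replicate ρ ((m, k) : Fin s × Fin s)), y ∈ basin A n m)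
    (hγ'D : ∀ y ∈ pathStatesL n x
        (List.replicate (η + ρ) ((m, k) : Fin s × Fin s) ++ σ), y ∈ basin A n m)
    (hγ''D : ∀ y ∈ pathStatesL n x
        (σ ++ List.replicate (η + ρ) ((m, k) : Fin s × Fin s)), y ∈ basin A n m) :
    ((η : ℝ) * (pathCostL A n x (List.replicate (η + ρ) ((m, k) : Fin s × Fin s) ++ σ)
          - pathCostL A n x (List.replicate η ((m, k) : Fin s × Fin s) ++ σ
              ++ List.replicate ρ ((m, k) : Fin s × Fin s)))
      + (ρ : ℝ) * (pathCostL A n x (σ ++ List.replicate (η + ρ) ((m, k) : Fin s × Fin s))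
          - pathCostL A n x (List.replicate η ((m, k) : Fin s × Fin s) ++ σ
              ++ List.replicate ρ ((m, k) : Fin s × Fin s))) = 0) ∧
    (let I := pathCostL A n x (List.replicate η ((m, k) : Fin s × Fin s) ++ σ
        ++ List.replicate ρ ((m, k) : Fin s × Fin s))
     let I' := pathCostL A n x (List.replicate (η + ρ) ((m, k) : Fin s × Fin s) ++ σ)
     let I'' := pathCostL A n x (σ ++ List.replicate (η + ρ) ((m, k) : Fin s × Fin s))
     (I' > I ∧ I > I'') ∨ (I'' > I ∧ I > I') ∨ (I'' = I ∧ I = I')) := by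
  set v : Fin s → ℝ := dvec n m k with hv
  set z0 : Fin s → ℝ := applyM n x σ with hz0
  set a : ℝ := pay A m x - pay A k x with ha
  set b : ℝ := pay A m z0 - pay A k z0 with hb
  set δ : ℝ := pay A m v - pay A k v with hδ
  set S : ℝ := (σ.map (fun mv => pay A m v - pay A mv.2 v)).sum with hS
  set C : ℝ := lPath A m n x σ with hC
  have hI : pathCostL A n x (List.replicate η ((m, k) : Fin s × Fin s) ++ σ
        ++ List.replicate ρ ((m, k) : Fin s × Fin s))
      = ((η : ℝ) * a + ((η : ℝ) * ((η : ℝ) - 1) / 2) * δ)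
        + (C + (η : ℝ) * S)
        + ((ρ : ℝ) * (b + (η : ℝ) * δ) + ((ρ : ℝ) * ((ρ : ℝ) - 1) / 2) * δ) := by
    rw [pathCost_eq_lPath A n m _ x hγD]
    rw [lPath_append, lPath_append, applyM_append, applyM_rep, applyM_add,
        lPath_translate, lPath_rep, lPath_rep]
    simp only [pay_add, pay_smul, ← mul_sub, ← hv, ← hz0, ← ha, ← hb, ← hδ]
    rw [sum_map_const_mul, ← hS, ← hC]
    ring
  have hI' : pathCostL A n x (List.replicate (η + ρ) ((m, k) : Fin s × Fin s) ++ σ)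
      = (((η : ℝ) + ρ) * a + (((η : ℝ) + ρ) * (((η : ℝ) + ρ) - 1) / 2) * δ)
        + (C + ((η : ℝ) + ρ) * S) := by
    rw [pathCost_eq_lPath A n m _ x hγ'D]
    rw [lPath_append, applyM_rep, lPath_translate, lPath_rep]
    simp only [pay_add, pay_smul, ← mul_sub, ← hv, ← ha, ← hδ]
    rw [sum_map_const_mul, ← hS, ← hC]
    push_cast
    ring
  have hI'' : pathCostL A n x (σ ++ List.replicate (η + ρ) ((m, k) : Fin s × Fin s))
      = C + (((η : ℝ) + ρ) * b + (((η : ℝ) + ρ) * (((η : ℝ) + ρ) - 1) / 2) * δ) := by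
    rw [pathCost_eq_lPath A n m _ x hγ''D]
    rw [lPath_append, lPath_rep]
    simp only [← hv, ← hz0, ← hb, ← hδ, ← hC]
    push_cast
    ring
  set c : ℝ := a - b + S with hc
  have hd1 : pathCostL A n x (List.replicate (η + ρ) ((m, k) : Fin s × Fin s) ++ σ)
      - pathCostL A n x (List.replicate η ((m, k) : Fin s × Fin s) ++ σ
          ++ List.replicate ρ ((m, k) : Fin s × Fin s)) = (ρ : ℝ) * c := by
    rw [hI, hI', hc]; ring
  have hd2 : pathCostL A n x (σ ++ List.replicate (η + ρ) ((m, k) : Fin s × Fin s))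
      - pathCostL A n x (List.replicate η ((m, k) : Fin s × Fin s) ++ σ
          ++ List.replicate ρ ((m, k) : Fin s × Fin s)) = -((η : ℝ) * c) := by
    rw [hI, hI'', hc]; ring
  have hηp : (0 : ℝ) < η := by exact_mod_cast Nat.lt_of_lt_of_le Nat.zero_lt_one hη
  have hρp : (0 : ℝ) < ρ := by exact_mod_cast Nat.lt_of_lt_of_le Nat.zero_lt_one hρ
  refine ⟨by rw [hd1, hd2]; ring, ?_⟩
  rcases lt_trichotomy c 0 with h | h | h
  · have h1 : (η : ℝ) * c < 0 := mul_neg_of_pos_of_neg hηp h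
    have h2 : (ρ : ℝ) * c < 0 := mul_neg_of_pos_of_neg hρp h
    exact Or.inr (Or.inl ⟨by linarith, by linarith⟩)
  · rw [h, mul_zero, neg_zero] at hd2
    rw [h, mul_zero] at hd1
    exact Or.inr (Or.inr ⟨by linarith, by linarith⟩)
  · have h1 : 0 < (η : ℝ) * c := mul_pos hηp h
    have h2 : 0 < (ρ : ℝ) * c := mul_pos hρp h
    exact Or.inl ⟨by linarith, by linarith⟩
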